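/- Fix an integer d ≥ 1 and T > 0. For every ν ∈ 𝕄_T and every ε' > 0 there exists μ ∈ 𝕄_T admitting a kernel K_μ such that K_μ(s,i) > 0 for all s ∈ [0,T] and all i ∈ {1,…,d}, the function s ↦ K_μ(s,i) is infinitely differentiable on [0,T] for every i, and d_T(μ, ν) ≤ ε'. In other words, the set 𝕄_T^{++} of such elements is dense in (𝕄_T, d_T). -/

import Mathlib

open MeasureTheory

/-- A kernel on `[0,T] × {1,…,d}`: a Borel measurable function `K` with `K s i ≥ 0`
and `∑ i, K s i = 1` for every `s ∈ [0,T]`. -/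
def IsMKernel (d : ℕ) (T : ℝ) (K : ℝ → Fin d → ℝ) : Prop :=
  (∀ i : Fin d, Measurable fun s => K s i) ∧
    ∀ s ∈ Set.Icc (0:ℝ) T, (∀ i : Fin d, 0 ≤ K s i) ∧ ∑ i : Fin d, K s i = 1

/-- The space `𝕄_T` of occupation-measure paths, viewed as a subset of
`C([0,T], ℝ^d)` with the supremum metric (which coincides with the metric `d_T`). -/
def MT (d : ℕ) (T : ℝ) : Set C(Set.Icc (0:ℝ) T, Fin d → ℝ) :=
  {ν | ∃ K : ℝ → Fin d → ℝ, IsMKernel d T K ∧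
    ∀ t : Set.Icc (0:ℝ) T, ∀ i : Fin d, ν t i = ∫ s in (0:ℝ)..(t:ℝ), K s i}

open scoped Convolution

private lemma auxPolyContDiff (p : Polynomial ℝ) : ContDiff ℝ (⊤ : ℕ∞) fun x : ℝ => p.eval x := by
  induction p using Polynomial.induction_on' with
  | add p q hp hq => simpa using hp.add hq
  | monomial n a =>
      simpa [Polynomial.eval_monomial] using (contDiff_const (c := a)).mul (contDiff_id.pow n)

private lemma auxDerivNonneg {f : ℝ → ℝ} (hm : Monotone f) (hd : Differentiable ℝ f) (x : ℝ) :
    0 ≤ deriv f x := by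
  have h := hasDerivAt_iff_tendsto_slope.mp (hd x).hasDerivAt
  have h2 : Filter.Tendsto (slope f x) (nhdsWithin x (Set.Ioi x)) (nhds (deriv f x)) :=
    h.mono_left (nhdsWithin_mono x fun y hy => ne_of_gt hy)
  refine ge_of_tendsto h2 ?_
  filter_upwards [self_mem_nhdsWithin] with y hy
  rw [slope_def_field]
  exact div_nonneg (sub_nonneg.2 (hm (le_of_lt hy))) (sub_nonneg.2 (le_of_lt hy))

set_option maxHeartbeats 1000000 in
/-- The set `𝕄_T^{++}` of elements of `𝕄_T` admitting a kernel which is strictly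
positive and infinitely differentiable on `[0,T]` is dense in `(𝕄_T, d_T)`. -/
theorem MTpp_dense (d : ℕ) (hd : 1 ≤ d) (T : ℝ) (hT : 0 < T)
    (ν : C(Set.Icc (0:ℝ) T, Fin d → ℝ)) (hν : ν ∈ MT d T) (ε' : ℝ) (hε' : 0 < ε') :
    ∃ μ ∈ MT d T,
      (∃ K : ℝ → Fin d → ℝ, IsMKernel d T K ∧
        (∀ s ∈ Set.Icc (0:ℝ) T, ∀ i : Fin d, 0 < K s i) ∧
        (∀ i : Fin d, ContDiffOn ℝ (⊤ : ℕ∞) (fun s => K s i) (Set.Icc (0:ℝ) T)) ∧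
        (∀ t : Set.Icc (0:ℝ) T, ∀ i : Fin d, μ t i = ∫ s in (0:ℝ)..(t:ℝ), K s i)) ∧
      dist μ ν ≤ ε' := by
  classical
  obtain ⟨Kν, ⟨hKm, hKs⟩, hKint⟩ := hν
  have hd0 : (0:ℝ) < d := by exact_mod_cast hd
  have hd1 : (1:ℝ) ≤ d := by exact_mod_cast hd
  have hmem0 : (0:ℝ) ∈ Set.Icc (0:ℝ) T := Set.left_mem_Icc.mpr hT.le
  -- basic bounds on the kernel of ν
  have hK01 : ∀ s ∈ Set.Icc (0:ℝ) T, ∀ i, 0 ≤ Kν s i ∧ Kν s i ≤ 1 := by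
    intro s hs i
    obtain ⟨h0, h1⟩ := hKs s hs
    refine ⟨h0 i, ?_⟩
    calc Kν s i ≤ ∑ j, Kν s j := Finset.single_le_sum (fun j _ => h0 j) (Finset.mem_univ i)
      _ = 1 := h1
  have hKii : ∀ (i : Fin d) (a b : ℝ), a ∈ Set.Icc (0:ℝ) T → b ∈ Set.Icc (0:ℝ) T →
      IntervalIntegrable (fun s => Kν s i) volume a b := by
    intro i a b ha hb
    rw [intervalIntegrable_iff]
    haveI : Fact (volume (Set.uIoc a b) < ⊤) := ⟨by rw [Set.uIoc]; exact measure_Ioc_lt_top⟩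
    refine Integrable.mono' (integrable_const 1) ((hKm i).aestronglyMeasurable.restrict) ?_
    rw [ae_restrict_iff' measurableSet_uIoc]
    filter_upwards with s hs
    have hs' : s ∈ Set.Icc (0:ℝ) T := Set.uIcc_subset_Icc ha hb (Set.uIoc_subset_uIcc hs)
    rw [Real.norm_eq_abs, abs_of_nonneg (hK01 s hs' i).1]
    exact (hK01 s hs' i).2
  -- basic properties of ν
  have hν0 : ∀ i, ν ⟨0, hmem0⟩ i = 0 := by
    intro i; rw [hKint]; simp
  have hνmono : ∀ (a b : Set.Icc (0:ℝ) T), (a:ℝ) ≤ b → ∀ i,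
      ν a i ≤ ν b i ∧ ν b i - ν a i ≤ (b:ℝ) - a := by
    intro a b hab i
    have hIccsub : Set.Icc (a:ℝ) (b:ℝ) ⊆ Set.Icc (0:ℝ) T :=
      fun u hu => ⟨le_trans a.2.1 hu.1, le_trans hu.2 b.2.2⟩
    have h1 : ν b i - ν a i = ∫ s in (a:ℝ)..(b:ℝ), Kν s i := by
      rw [hKint, hKint, ← intervalIntegral.integral_add_adjacent_intervals
        (hKii i 0 a hmem0 a.2) (hKii i (a:ℝ) (b:ℝ) a.2 b.2)]
      ring
    have hnn : 0 ≤ ∫ s in (a:ℝ)..(b:ℝ), Kν s i :=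
      intervalIntegral.integral_nonneg hab (fun u hu => (hK01 u (hIccsub hu) i).1)
    have h2 : ∫ s in (a:ℝ)..(b:ℝ), Kν s i ≤ ∫ _ in (a:ℝ)..(b:ℝ), (1:ℝ) :=
      intervalIntegral.integral_mono_on hab (hKii i (a:ℝ) (b:ℝ) a.2 b.2)
        intervalIntegrable_const (fun u hu => (hK01 u (hIccsub hu) i).2)
    have h3 : ∫ _ in (a:ℝ)..(b:ℝ), (1:ℝ) = (b:ℝ) - a := by simp
    constructor
    · linarith
    · linarith
  have hνsum : ∀ t : Set.Icc (0:ℝ) T, ∑ i, ν t i = (t:ℝ) := by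
    intro t
    have h1 : ∀ i ∈ Finset.univ, IntervalIntegrable (fun s => Kν s i) volume 0 (t:ℝ) :=
      fun i _ => hKii i 0 t hmem0 t.2
    calc ∑ i, ν t i = ∑ i, ∫ s in (0:ℝ)..(t:ℝ), Kν s i :=
          Finset.sum_congr rfl fun i _ => hKint t i
      _ = ∫ s in (0:ℝ)..(t:ℝ), ∑ i, Kν s i :=
          (intervalIntegral.integral_finset_sum h1).symm
      _ = ∫ _ in (0:ℝ)..(t:ℝ), (1:ℝ) := by
          apply intervalIntegral.integral_congr
          intro s hs
          exact (hKs s (Set.uIcc_subset_Icc hmem0 t.2 hs)).2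
      _ = (t:ℝ) := by simp
  -- the clamping projection
  obtain ⟨pr, hprdef⟩ : ∃ pr : ℝ → ℝ, pr = fun x => max 0 (min x T) := ⟨_, rfl⟩
  have hprmem : ∀ x, pr x ∈ Set.Icc (0:ℝ) T := by
    intro x; rw [hprdef]
    exact ⟨le_max_left _ _, max_le hT.le (min_le_right x T)⟩
  have hprmono : Monotone pr := by
    rw [hprdef]; exact monotone_const.max (monotone_id.min monotone_const)
  have hprc : Continuous pr := by
    rw [hprdef]; exact continuous_const.max (continuous_id.min continuous_const)
  have hprlip : ∀ x y, x ≤ y → pr y - pr x ≤ y - x := by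
    intro x y hxy
    have h1 : min y T ≤ min x T + (y - x) := by
      rcases le_total x T with h | h
      · rw [min_eq_left h]
        calc min y T ≤ y := min_le_left y T
          _ = x + (y - x) := by ring
      · rw [min_eq_right h]
        calc min y T ≤ T := min_le_right y T
          _ ≤ T + (y - x) := by linarith
    have h2 : pr y ≤ max 0 (min x T) + (y - x) := by
      rw [hprdef]
      refine max_le ?_ (le_trans h1 (add_le_add_left (le_max_right 0 (min x T)) _))
      have : (0:ℝ) ≤ max 0 (min x T) := le_max_left _ _
      linarith
    have h3 : pr x = max 0 (min x T) := by rw [hprdef]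
    linarith
  have hprIcc : ∀ t : Set.Icc (0:ℝ) T, pr (t:ℝ) = (t:ℝ) := by
    intro t; rw [hprdef]
    simp only
    rw [min_eq_left t.2.2, max_eq_right t.2.1]
  -- the extension F of ν to ℝ
  obtain ⟨pI, hpIdef⟩ : ∃ pI : ℝ → Set.Icc (0:ℝ) T, pI = fun x => ⟨pr x, hprmem x⟩ := ⟨_, rfl⟩
  have hpIval : ∀ x, (pI x : ℝ) = pr x := by intro x; rw [hpIdef]
  have hpIcont : Continuous pI := by
    rw [hpIdef]; exact Continuous.subtype_mk hprc _
  obtain ⟨F, hFdef⟩ : ∃ F : Fin d → ℝ → ℝ,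
      F = fun i x => ν (pI x) i + (x - pr x) / d := ⟨_, rfl⟩
  have hFcont : ∀ i, Continuous (F i) := by
    intro i; rw [hFdef]
    exact (((continuous_apply i).comp (ν.continuous.comp hpIcont))).add
      ((continuous_id.sub hprc).div_const _)
  have hFmono : ∀ (i : Fin d) (x y : ℝ), x ≤ y → F i x ≤ F i y ∧ F i y - F i x ≤ y - x := by
    intro i x y hxy
    have hpm : ((pI x : ℝ)) ≤ (pI y : ℝ) := by rw [hpIval, hpIval]; exact hprmono hxy
    obtain ⟨hm1, hm2⟩ := hνmono (pI x) (pI y) hpm i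
    have hpp := hprlip x y hxy
    have hq : 0 ≤ (y - pr y) - (x - pr x) := by linarith
    have hsubdiv : ((y - pr y) - (x - pr x)) / (d:ℝ)
        = (y - pr y)/(d:ℝ) - (x - pr x)/(d:ℝ) := sub_div _ _ _
    have hnn : 0 ≤ ((y - pr y) - (x - pr x)) / (d:ℝ) := div_nonneg hq hd0.le
    have hds : ((y - pr y) - (x - pr x)) / (d:ℝ) ≤ (y - pr y) - (x - pr x) :=
      div_le_self hq hd1
    have hFx : F i x = ν (pI x) i + (x - pr x)/d := by rw [hFdef]
    have hFy : F i y = ν (pI y) i + (y - pr y)/d := by rw [hFdef]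
    have hm2' : ν (pI y) i - ν (pI x) i ≤ pr y - pr x := by
      calc ν (pI y) i - ν (pI x) i ≤ ((pI y : ℝ)) - ((pI x : ℝ)) := hm2
        _ = pr y - pr x := by rw [hpIval, hpIval]
    constructor
    · linarith
    · linarith
  have hFsum : ∀ x, ∑ i, F i x = x := by
    intro x
    have h1 : ∑ i, F i x = ∑ i, (ν (pI x) i + (x - pr x)/d) := by
      refine Finset.sum_congr rfl fun i _ => ?_; rw [hFdef]
    rw [h1, Finset.sum_add_distrib, hνsum (pI x), Finset.sum_const, Finset.card_univ,
      Fintype.card_fin, nsmul_eq_mul, hpIval]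
    have h2 : (d:ℝ) * ((x - pr x)/d) = x - pr x := by field_simp
    linarith
  have hFI : ∀ (i : Fin d) (t : Set.Icc (0:ℝ) T), F i (t:ℝ) = ν t i := by
    intro i t
    have h2 : pI (t:ℝ) = t := Subtype.ext (by rw [hpIval]; exact hprIcc t)
    rw [hFdef]
    simp only
    rw [h2, hprIcc t]
    simp
  have hF0 : ∀ i, F i 0 = 0 := by
    intro i
    have h := hFI i ⟨0, hmem0⟩
    simpa [hν0 i] using h
  have hFlip : ∀ (i : Fin d) (x y : ℝ), dist (F i x) (F i y) ≤ dist x y := by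
    intro i x y
    rcases le_total x y with h | h
    · obtain ⟨h1, h2⟩ := hFmono i x y h
      rw [Real.dist_eq, Real.dist_eq, abs_of_nonpos (by linarith), abs_of_nonpos (by linarith)]
      linarith
    · obtain ⟨h1, h2⟩ := hFmono i y x h
      rw [Real.dist_eq, Real.dist_eq, abs_of_nonneg (by linarith), abs_of_nonneg (by linarith)]
      linarith
  -- mollification
  have hε8 : 0 < ε'/8 := by linarith
  obtain ⟨φ, hφIn, hφOut⟩ : ∃ φ : ContDiffBump (0:ℝ), φ.rIn = ε'/16 ∧ φ.rOut = ε'/8 :=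
    ⟨⟨ε'/16, ε'/8, by linarith, by linarith⟩, rfl, rfl⟩
  obtain ⟨ψ, hψdef⟩ : ∃ ψ : ℝ → ℝ, ψ = φ.normed volume := ⟨_, rfl⟩
  obtain ⟨G, hGdef⟩ : ∃ G : Fin d → ℝ → ℝ,
      G = fun i => ψ ⋆[ContinuousLinearMap.lsmul ℝ ℝ, volume] F i := ⟨_, rfl⟩
  have hFloc : ∀ i, LocallyIntegrable (F i) volume := fun i => (hFcont i).locallyIntegrable
  have hGsm : ∀ i, ContDiff ℝ ((⊤:ℕ∞) : WithTop ℕ∞) (G i) := by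
    intro i; rw [hGdef, hψdef]
    exact HasCompactSupport.contDiff_convolution_left _ φ.hasCompactSupport_normed
      φ.contDiff_normed (hFloc i)
  have hGex : ∀ i, ConvolutionExists ψ (F i) (ContinuousLinearMap.lsmul ℝ ℝ) volume := by
    intro i; rw [hψdef]
    exact HasCompactSupport.convolutionExists_left _ φ.hasCompactSupport_normed
      φ.continuous_normed (hFloc i)
  have hGint : ∀ i x, Integrable (fun t => ψ t * F i (x - t)) volume := by
    intro i x
    have h := (hGex i x).integrable
    simpa only [ContinuousLinearMap.lsmul_apply, smul_eq_mul] using h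
  have hGeq : ∀ i x, G i x = ∫ t, ψ t * F i (x - t) := by
    intro i x
    rw [hGdef]
    simp only [convolution_def, ContinuousLinearMap.lsmul_apply, smul_eq_mul]
  have hGclose : ∀ i x, dist (G i x) (F i x) ≤ ε'/8 := by
    intro i x
    rw [hGdef, hψdef]
    refine ContDiffBump.dist_normed_convolution_le (hFcont i).aestronglyMeasurable ?_
    intro y hy
    calc dist (F i y) (F i x) ≤ dist y x := hFlip i y x
      _ ≤ ε'/8 := by
          have h := Metric.mem_ball.mp hy
          rw [hφOut] at h
          exact h.le
  have hGmono : ∀ i, Monotone (G i) := by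
    intro i x y hxy
    rw [hGeq i x, hGeq i y]
    refine integral_mono (hGint i x) (hGint i y) ?_
    intro t
    have hψnn : 0 ≤ ψ t := by rw [hψdef]; exact φ.nonneg_normed t
    exact mul_le_mul_of_nonneg_left (hFmono i _ _ (by linarith)).1 hψnn
  have hψint : Integrable ψ volume := by rw [hψdef]; exact φ.integrable_normed
  have hψcont : Continuous ψ := by rw [hψdef]; exact φ.continuous_normed
  have hψx : Integrable (fun t => ψ t * t) volume := by
    refine (hψcont.mul continuous_id).integrable_of_hasCompactSupport ?_
    rw [hψdef]
    exact φ.hasCompactSupport_normed.mul_right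
  have hGsum : ∀ x, ∑ i, G i x = x - ∫ t, ψ t * t := by
    intro x
    calc ∑ i, G i x = ∑ i, ∫ t, ψ t * F i (x - t) :=
          Finset.sum_congr rfl fun i _ => hGeq i x
      _ = ∫ t, ∑ i, ψ t * F i (x - t) := (integral_finset_sum _ (fun i _ => hGint i x)).symm
      _ = ∫ t, (ψ t * x - ψ t * t) := by
          congr 1; funext t
          rw [← Finset.mul_sum, hFsum]; ring
      _ = (∫ t, ψ t * x) - ∫ t, ψ t * t := integral_sub (hψint.mul_const x) hψx
      _ = x - ∫ t, ψ t * t := by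
          rw [integral_mul_const]
          have h : ∫ t, ψ t ∂volume = 1 := by rw [hψdef]; exact φ.integral_normed
          rw [h, one_mul]
  have hGd : ∀ i, Differentiable ℝ (G i) :=
    fun i => (hGsm i).differentiable (by simp)
  have hGdc : ∀ i, Continuous (deriv (G i)) :=
    fun i => (hGsm i).continuous_deriv (by exact_mod_cast le_top)
  have hGd0 : ∀ i x, 0 ≤ deriv (G i) x := fun i => auxDerivNonneg (hGmono i) (hGd i)
  have hGdsum : ∀ x, ∑ i, deriv (G i) x = 1 := by
    intro x
    have h1 : deriv (fun y => ∑ i, G i y) x = ∑ i, deriv (G i) x :=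
      deriv_fun_sum (fun i _ => (hGd i).differentiableAt)
    have h2 : (fun y => ∑ i, G i y) = fun y => y - ∫ t, ψ t * t := funext hGsum
    rw [← h1, h2]
    exact ((hasDerivAt_id x).sub_const _).deriv
  -- mixing parameter and polynomial approximation
  obtain ⟨θ, hθdef⟩ : ∃ θ : ℝ, θ = ε' / (ε' + 8*T) := ⟨_, rfl⟩
  have hθ0 : 0 < θ := by rw [hθdef]; exact div_pos hε' (by linarith)
  have hθ1 : θ < 1 := by rw [hθdef, div_lt_one (by linarith)]; linarith
  have hθT : θ * T ≤ ε'/8 := by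
    rw [hθdef, div_mul_eq_mul_div, div_le_iff₀ (by linarith)]
    nlinarith
  obtain ⟨η, hηdef⟩ : ∃ η : ℝ, η = θ / (2*d*(d+1)) := ⟨_, rfl⟩
  have h2d : (0:ℝ) < 2*d*(d+1) := by nlinarith
  have hη0 : 0 < η := by rw [hηdef]; exact div_pos hθ0 h2d
  have hdθ : ((d:ℝ)+1)*η = θ/(2*d) := by
    rw [hηdef]; field_simp
  have hη2 : η ≤ θ/(2*(d:ℝ)) := by
    have h1 : η ≤ ((d:ℝ)+1)*η := by nlinarith
    linarith
  have h2dlt : θ/(2*(d:ℝ)) < θ/(d:ℝ) := by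
    apply div_lt_div_of_pos_left hθ0 hd0
    linarith
  have hθd : 0 < θ/(d:ℝ) := div_pos hθ0 hd0
  have hdd : θ/(d:ℝ) ≤ θ := div_le_self hθ0.le hd1
  have hP : ∀ i : Fin d, ∃ p : Polynomial ℝ,
      ∀ x ∈ Set.Icc (0:ℝ) T, |p.eval x - deriv (G i) x| < η := fun i =>
    exists_polynomial_near_of_continuousOn 0 T _ (hGdc i).continuousOn η hη0
  choose P hPc using hP
  obtain ⟨i0, hi0⟩ : ∃ i0 : Fin d, i0 = ⟨0, hd⟩ := ⟨_, rfl⟩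
  obtain ⟨K, hKdef⟩ : ∃ K : ℝ → Fin d → ℝ, K = fun s i => (1-θ) * (P i).eval s + θ/d
      + (if i = i0 then (1-θ)*(1 - ∑ j, (P j).eval s) else 0) := ⟨_, rfl⟩
  have hKeq : ∀ s i, K s i = (1-θ) * (P i).eval s + θ/d
      + (if i = i0 then (1-θ)*(1 - ∑ j, (P j).eval s) else 0) := by
    intro s i; rw [hKdef]
  have hQc : ∀ i : Fin d, Continuous fun s => (P i).eval s := fun i => (P i).continuous
  have hKfun : ∀ i, (fun s => K s i) = fun s => (1-θ) * (P i).eval s + θ/d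
      + (if i = i0 then (1-θ)*(1 - ∑ j, (P j).eval s) else 0) := by
    intro i; funext s; rw [hKeq]
  have hKcont : ∀ i, Continuous fun s => K s i := by
    intro i
    rw [hKfun i]
    by_cases hi : i = i0
    · simp only [if_pos hi]
      exact ((continuous_const.mul (hQc i)).add continuous_const).add
        (continuous_const.mul (continuous_const.sub (continuous_finset_sum _ fun j _ => hQc j)))
    · simp only [if_neg hi]
      exact ((continuous_const.mul (hQc i)).add continuous_const).add continuous_const
  have hKsmooth : ∀ i, ContDiff ℝ (⊤ : ℕ∞) fun s => K s i := by
    intro i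
    rw [hKfun i]
    by_cases hi : i = i0
    · simp only [if_pos hi]
      exact ((contDiff_const.mul (auxPolyContDiff (P i))).add contDiff_const).add
        (contDiff_const.mul (contDiff_const.sub
          (ContDiff.sum fun j _ => auxPolyContDiff (P j))))
    · simp only [if_neg hi]
      exact ((contDiff_const.mul (auxPolyContDiff (P i))).add contDiff_const).add contDiff_const
  have hKsum : ∀ s, ∑ i, K s i = 1 := by
    intro s
    have h1 : ∑ i, K s i = ∑ i, ((1-θ) * (P i).eval s + θ/d
        + (if i = i0 then (1-θ)*(1 - ∑ j, (P j).eval s) else 0)) :=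
      Finset.sum_congr rfl fun i _ => hKeq s i
    rw [h1, Finset.sum_add_distrib, Finset.sum_add_distrib, ← Finset.mul_sum,
      Finset.sum_ite_eq' Finset.univ i0, if_pos (Finset.mem_univ i0), Finset.sum_const,
      Finset.card_univ, Fintype.card_fin, nsmul_eq_mul]
    have h2 : (d:ℝ) * (θ/d) = θ := by field_simp
    rw [h2]; ring
  -- pointwise bounds on K on [0,T]
  have hKey : ∀ s ∈ Set.Icc (0:ℝ) T, ∀ i,
      0 < K s i ∧ |K s i - ((1-θ) * deriv (G i) s + θ/d)| ≤ θ := by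
    intro s hs i
    have h1 : ∀ j, -η ≤ (P j).eval s - deriv (G j) s ∧ (P j).eval s - deriv (G j) s ≤ η :=
      fun j => abs_le.mp (hPc j s hs).le
    have hsumb : |∑ j, ((P j).eval s - deriv (G j) s)| ≤ d * η := by
      calc |∑ j, ((P j).eval s - deriv (G j) s)| ≤ ∑ j, |(P j).eval s - deriv (G j) s| :=
            Finset.abs_sum_le_sum_abs _ _
        _ ≤ ∑ _j : Fin d, η := Finset.sum_le_sum fun j _ => abs_le.mpr (h1 j)
        _ = d * η := by rw [Finset.sum_const, Finset.card_univ, Fintype.card_fin, nsmul_eq_mul]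
    obtain ⟨hS1, hS2⟩ := abs_le.mp hsumb
    have h2 : 1 - ∑ j, (P j).eval s = - ∑ j, ((P j).eval s - deriv (G j) s) := by
      rw [Finset.sum_sub_distrib, hGdsum s]; ring
    have hQlb : ∀ j, -η ≤ (P j).eval s := by
      intro j
      have hh := (h1 j).1
      have hh2 := hGd0 j s
      linarith
    have hp1 : 0 ≤ θ*η := mul_nonneg hθ0.le hη0.le
    have hp2 : 0 ≤ θ*((d:ℝ)*η) := mul_nonneg hθ0.le (mul_nonneg hd0.le hη0.le)
    have h1θ : (0:ℝ) ≤ 1-θ := by linarith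
    constructor
    · rw [hKeq]
      by_cases hi : i = i0
      · simp only [if_pos hi]
        have m1 : (1-θ)*(-η) ≤ (1-θ)*(P i).eval s :=
          mul_le_mul_of_nonneg_left (hQlb i) h1θ
        have m2 : (1-θ)*(-((d:ℝ)*η)) ≤ (1-θ)*(1 - ∑ j, (P j).eval s) := by
          refine mul_le_mul_of_nonneg_left ?_ h1θ
          rw [h2]; linarith
        linarith [m1, m2, hp1, hp2, hdθ, h2dlt]
      · simp only [if_neg hi, add_zero]
        have m1 : (1-θ)*(-η) ≤ (1-θ)*(P i).eval s :=
          mul_le_mul_of_nonneg_left (hQlb i) h1θ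
        linarith [m1, hp1, hη2, h2dlt]
    · rw [hKeq]
      by_cases hi : i = i0
      · simp only [if_pos hi]
        have e : (1-θ) * (P i).eval s + θ/d + (1-θ)*(1 - ∑ j, (P j).eval s)
            - ((1-θ) * deriv (G i) s + θ/d)
            = (1-θ)*((P i).eval s - deriv (G i) s)
              - (1-θ)*(∑ j, ((P j).eval s - deriv (G j) s)) := by
          rw [h2]; ring
        rw [e, abs_le]
        have m1 := mul_le_mul_of_nonneg_left (h1 i).1 h1θ
        have m2 := mul_le_mul_of_nonneg_left (h1 i).2 h1θ
        have m3 := mul_le_mul_of_nonneg_left hS1 h1θ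
        have m4 := mul_le_mul_of_nonneg_left hS2 h1θ
        constructor <;> linarith [m1, m2, m3, m4, hp1, hp2, hdθ, h2dlt, hdd]
      · simp only [if_neg hi, add_zero]
        have e : (1-θ) * (P i).eval s + θ/d - ((1-θ) * deriv (G i) s + θ/d)
            = (1-θ)*((P i).eval s - deriv (G i) s) := by ring
        rw [e, abs_le]
        have m1 := mul_le_mul_of_nonneg_left (h1 i).1 h1θ
        have m2 := mul_le_mul_of_nonneg_left (h1 i).2 h1θ
        constructor <;> linarith [m1, m2, hp1, hη2, h2dlt, hdd]
  have hKpos : ∀ s ∈ Set.Icc (0:ℝ) T, ∀ i, 0 < K s i := fun s hs i => (hKey s hs i).1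
  have hKapprox : ∀ s ∈ Set.Icc (0:ℝ) T, ∀ i,
      |K s i - ((1-θ) * deriv (G i) s + θ/d)| ≤ θ := fun s hs i => (hKey s hs i).2
  have hker : IsMKernel d T K :=
    ⟨fun i => (hKcont i).measurable, fun s hs => ⟨fun i => (hKpos s hs i).le, hKsum s⟩⟩
  -- the approximating element μ
  have hprim : ∀ i, Continuous fun t : ℝ => ∫ s in (0:ℝ)..t, K s i := fun i =>
    intervalIntegral.continuous_primitive (fun a b => (hKcont i).intervalIntegrable a b) 0
  have hμcont : Continuous fun t : Set.Icc (0:ℝ) T => fun i => ∫ s in (0:ℝ)..(t:ℝ), K s i :=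
    continuous_pi fun i => (hprim i).comp continuous_subtype_val
  -- the main estimate
  have hfinal : ∀ (t : Set.Icc (0:ℝ) T) (i : Fin d),
      |(∫ s in (0:ℝ)..(t:ℝ), K s i) - ν t i| ≤ ε' := by
    intro t i
    have ht0 : 0 ≤ (t:ℝ) := t.2.1
    have htT : (t:ℝ) ≤ T := t.2.2
    have hbc : Continuous fun s => (1-θ) * deriv (G i) s + θ/(d:ℝ) :=
      (continuous_const.mul (hGdc i)).add continuous_const
    have hsub : ∀ x ∈ Set.uIoc (0:ℝ) (t:ℝ), ‖K x i - ((1-θ) * deriv (G i) x + θ/d)‖ ≤ θ := by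
      intro x hx
      have hx' : x ∈ Set.Icc (0:ℝ) T := Set.uIcc_subset_Icc hmem0 t.2 (Set.uIoc_subset_uIcc hx)
      rw [Real.norm_eq_abs]
      exact hKapprox x hx' i
    have e1 : |(∫ s in (0:ℝ)..(t:ℝ), K s i)
        - ∫ s in (0:ℝ)..(t:ℝ), ((1-θ) * deriv (G i) s + θ/d)| ≤ ε'/8 := by
      rw [← intervalIntegral.integral_sub ((hKcont i).intervalIntegrable 0 (t:ℝ))
        (hbc.intervalIntegrable 0 (t:ℝ))]
      have h := intervalIntegral.norm_integral_le_of_norm_le_const hsub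
      rw [Real.norm_eq_abs] at h
      calc |∫ s in (0:ℝ)..(t:ℝ), (K s i - ((1-θ) * deriv (G i) s + θ/d))|
          ≤ θ * |(t:ℝ) - 0| := h
        _ = θ * (t:ℝ) := by rw [sub_zero, abs_of_nonneg ht0]
        _ ≤ θ * T := mul_le_mul_of_nonneg_left htT hθ0.le
        _ ≤ ε'/8 := hθT
    have e2 : (∫ s in (0:ℝ)..(t:ℝ), ((1-θ) * deriv (G i) s + θ/d))
        = (1-θ)*(G i (t:ℝ) - G i 0) + θ/d*(t:ℝ) := by
      have hder : ∀ x ∈ Set.uIcc (0:ℝ) (t:ℝ), HasDerivAt (fun y => (1-θ)*(G i y) + θ/(d:ℝ)*y)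
          ((1-θ) * deriv (G i) x + θ/d) x := by
        intro x _
        have hh1 : HasDerivAt (fun y => (1-θ)*(G i y)) ((1-θ) * deriv (G i) x) x :=
          ((hGd i) x).hasDerivAt.const_mul (1-θ)
        have hh2 : HasDerivAt (fun y : ℝ => θ/(d:ℝ)*y) (θ/(d:ℝ)) x := by
          simpa using (hasDerivAt_id x).const_mul (θ/(d:ℝ))
        exact hh1.add hh2
      rw [intervalIntegral.integral_eq_sub_of_hasDerivAt hder (hbc.intervalIntegrable 0 (t:ℝ))]
      ring
    have ha := hGclose i (t:ℝ)
    have hb := hGclose i 0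
    rw [Real.dist_eq, hFI i t] at ha
    rw [Real.dist_eq, hF0 i, sub_zero] at hb
    obtain ⟨ha1, ha2⟩ := abs_le.mp ha
    obtain ⟨hb1, hb2⟩ := abs_le.mp hb
    have hν1 : 0 ≤ ν t i ∧ ν t i ≤ (t:ℝ) := by
      obtain ⟨u1, u2⟩ := hνmono ⟨0, hmem0⟩ t ht0 i
      rw [hν0 i] at u1 u2
      have u2' : ν t i - 0 ≤ (t:ℝ) - 0 := by simpa using u2
      exact ⟨by linarith, by linarith⟩
    have htd : 0 ≤ (t:ℝ)/d ∧ (t:ℝ)/d ≤ T :=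
      ⟨div_nonneg ht0 hd0.le, (div_le_self ht0 hd1).trans htT⟩
    have e3 : |(1-θ)*(G i (t:ℝ) - G i 0) + θ/d*(t:ℝ) - ν t i| ≤ ε'/4 + ε'/8 := by
      have hE : (1-θ)*(G i (t:ℝ) - G i 0) + θ/d*(t:ℝ) - ν t i
          = (1-θ)*(G i (t:ℝ) - ν t i) - (1-θ)*(G i 0) + θ*((t:ℝ)/d - ν t i) := by
        ring
      rw [hE, abs_le]
      have h1θ : (0:ℝ) ≤ 1-θ := by linarith
      have m1 := mul_le_mul_of_nonneg_left ha1 h1θ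
      have m2 := mul_le_mul_of_nonneg_left ha2 h1θ
      have m3 := mul_le_mul_of_nonneg_left hb1 h1θ
      have m4 := mul_le_mul_of_nonneg_left hb2 h1θ
      have m5 : θ*((t:ℝ)/d - ν t i) ≤ θ*T :=
        mul_le_mul_of_nonneg_left (by linarith [htd.2, hν1.1]) hθ0.le
      have m6 : θ*(-T) ≤ θ*((t:ℝ)/d - ν t i) :=
        mul_le_mul_of_nonneg_left (by linarith [htd.1, hν1.2]) hθ0.le
      have hp1 : 0 ≤ θ*(ε'/8) := by positivity
      constructor <;> linarith [m1, m2, m3, m4, m5, m6, hp1, hθT]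
    calc |(∫ s in (0:ℝ)..(t:ℝ), K s i) - ν t i|
        ≤ |(∫ s in (0:ℝ)..(t:ℝ), K s i)
            - ∫ s in (0:ℝ)..(t:ℝ), ((1-θ) * deriv (G i) s + θ/d)|
          + |(∫ s in (0:ℝ)..(t:ℝ), ((1-θ) * deriv (G i) s + θ/d)) - ν t i| := abs_sub_le _ _ _
      _ ≤ ε'/8 + (ε'/4 + ε'/8) := add_le_add e1 (by rw [e2]; exact e3)
      _ ≤ ε' := by linarith
  refine ⟨⟨fun t => fun i => ∫ s in (0:ℝ)..(t:ℝ), K s i, hμcont⟩,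
    ⟨K, hker, fun t i => rfl⟩,
    ⟨K, hker, hKpos, fun i => (hKsmooth i).contDiffOn, fun t i => rfl⟩, ?_⟩
  rw [ContinuousMap.dist_le hε'.le]
  intro t
  rw [dist_pi_le_iff hε'.le]
  intro i
  rw [ContinuousMap.coe_mk, Real.dist_eq]
  exact hfinal t i
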